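/- arXiv:1305.1914 — 3 statements merged into one kernel-verified Lean document; each statement's English description precedes it below -/
import Mathlib

section
/- Let A be an artinian object of an abelian category and f : A → A an endomorphism. Then there exists N such that for all n ≥ N, the join of the kernel subobject of f^n and the image subobject of f^n is all of A: kernelSubobject(f^n) ⊔ imageSubobject(f^n) = ⊤ in the subobject lattice of A. -/
open CategoryTheory CategoryTheory.Limits

/-! Since `A` is artinian, the images of `fⁿ` stabilise, so for large `n` the endomorphism
`g = fⁿ` maps `Im g` onto `Im g`. Elementwise: every `x` has `g x = g (g y)` for some `y`, so
`x - g y ∈ Ker g`. Categorically, a map `c` out of `A` killing `Ker g` factors through the epi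
`A ⟶ Im g`, and if `c` also kills `Im g` the surjectivity of `g` onto `Im g` forces `c = 0`;
applied to the cokernel of `Ker g ⊔ Im g ⟶ A` this gives `Ker g ⊔ Im g = ⊤`. -/

section

variable {C : Type*} [Category C]

lemma epi_comp_factorThruImageSubobject_of_imageSubobject_comp_eq [HasEqualizers C]
    [HasImages C] {W X Y : C} (h : W ⟶ X) (g : X ⟶ Y)
    (H : imageSubobject (h ≫ g) = imageSubobject g) :
    Epi (h ≫ factorThruImageSubobject g) := by
  have hfac : factorThruImageSubobject (h ≫ g) ≫ (Subobject.isoOfEq _ _ H).hom =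
      h ≫ factorThruImageSubobject g := by
    rw [← cancel_mono (imageSubobject g).arrow]
    simp
  rw [← hfac]
  exact epi_comp _ _

variable [Abelian C]

lemma eq_zero_of_kernel_ι_comp_eq_zero_of_epi {W X Y Z : C} (g : X ⟶ Y) (h : W ⟶ X)
    [Epi (h ≫ factorThruImageSubobject g)] (c : X ⟶ Z)
    (hker : kernel.ι g ≫ c = 0) (hh : h ≫ c = 0) : c = 0 := by
  have hker' : kernel.ι (factorThruImageSubobject g) ≫ c = 0 := by
    have : kernel.ι (factorThruImageSubobject g) ≫ g = 0 := by
      simpa using kernel.condition_assoc (factorThruImageSubobject g) (imageSubobject g).arrow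
    rw [← kernel.lift_ι g _ this, Category.assoc, hker, comp_zero]
  set d := Abelian.epiDesc (factorThruImageSubobject g) c hker'
  have hd : factorThruImageSubobject g ≫ d = c := Abelian.comp_epiDesc _ _ _
  have : d = 0 := zero_of_epi_comp (h ≫ factorThruImageSubobject g) (by
    rw [Category.assoc, hd, hh])
  rw [← hd, this, comp_zero]

lemma kernelSubobject_sup_imageSubobject_eq_top {W X Y : C} (g : X ⟶ Y) (h : W ⟶ X)
    [Epi (h ≫ factorThruImageSubobject g)] :
    kernelSubobject g ⊔ imageSubobject h = ⊤ := by
  set S := kernelSubobject g ⊔ imageSubobject h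
  have hS : S ≤ kernelSubobject (cokernel.π S.arrow) :=
    le_kernelSubobject _ _ (cokernel.condition _)
  have hπ : cokernel.π S.arrow = 0 := by
    refine eq_zero_of_kernel_ι_comp_eq_zero_of_epi g h _ ?_ ?_ <;>
      rw [← kernelSubobject_factors_iff]
    · exact Subobject.factors_of_le _ (le_sup_left.trans hS)
        (kernelSubobject_factors _ _ (kernel.condition g))
    · exact Subobject.factors_of_le _ (le_sup_right.trans hS)
        (by simpa using imageSubobject_factors_comp_self h (𝟙 _))
  have : Epi S.arrow := Abelian.epi_of_cokernel_π_eq_zero _ hπ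
  have : IsIso S.arrow := isIso_of_mono_of_epi _
  exact Subobject.eq_top_of_isIso_arrow S

end

/-- If `A` is an artinian object of an abelian category (its subobject lattice
satisfies the descending chain condition) and `f : A ⟶ A` is an endomorphism, then
for all sufficiently large `n`, `Ker fⁿ ⊔ Im fⁿ = ⊤` in the subobject lattice of `A`. -/
theorem kernel_sup_image_eq_top_of_artinianObject {𝒜 : Type*} [Category 𝒜] [Abelian 𝒜]
    (A : 𝒜) [IsArtinianObject A] (f : End A) :
    ∃ N : ℕ, ∀ n ≥ N,
      kernelSubobject ((f ^ n : End A) : A ⟶ A) ⊔ imageSubobject ((f ^ n : End A) : A ⟶ A) = ⊤ := by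
  have anti : Antitone fun n : ℕ ↦ imageSubobject ((f ^ n : End A) : A ⟶ A) :=
    antitone_nat_of_succ_le fun n ↦ by
      rw [pow_succ, End.mul_def]
      exact imageSubobject_comp_le _ _
  obtain ⟨N, hN⟩ := WellFoundedLT.antitone_chain_condition anti
  refine ⟨N, fun n hn ↦ ?_⟩
  have hstable : imageSubobject ((f ^ n : End A) ≫ (f ^ n : End A)) =
      imageSubobject ((f ^ n : End A) : A ⟶ A) := by
    rw [← End.mul_def, ← pow_add, ← hN n hn, ← hN (n + n) (by omega)]
  have := epi_comp_factorThruImageSubobject_of_imageSubobject_comp_eq _ _ hstable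
  exact kernelSubobject_sup_imageSubobject_eq_top _ _
end

section
/- (Fitting Lemma) Let A be an object of finite length in an abelian category (i.e., A is both noetherian and artinian) and f : A → A an endomorphism. Then there exists N such that for all n ≥ N, the subobjects kernelSubobject(f^n) and imageSubobject(f^n) are complements in the subobject lattice of A (their meet is ⊥ and their join is ⊤); consequently A is isomorphic to the direct sum Ker f^n ⊕ Im f^n via the morphism induced by the two inclusions. -/
/-!
The kernels of the powers of `f` increase and their images decrease, so both chains become
stationary; for large `n`, `g = fⁿ` has `ker g² = ker g` and `im g² = im g`. The first gives
`ker g ⊓ im g = ⊥` (if `g y ∈ ker g` then `y ∈ ker g² = ker g`, so `g y = 0`), the second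
`ker g ⊔ im g = ⊤` (writing `g x = g² y`, `x = (x - g y) + g y`); both arguments run on
generalized elements, up to refinement. Complementary subobjects make the sum map out of
their biproduct both monic and epic.
-/

open CategoryTheory CategoryTheory.Limits

namespace CategoryTheory

variable {C : Type*} [Category C] [Abelian C] {A : C}

namespace Subobject

variable {X Y : Subobject A}

lemma mono_biprod_desc_arrow_of_inf_eq_bot (h : X ⊓ Y = ⊥) :
    Mono (biprod.desc X.arrow Y.arrow) := by
  refine Preadditive.mono_of_cancel_zero _ fun {T} t ht => ?_
  rw [biprod.desc_eq, Preadditive.comp_add, ← Category.assoc, ← Category.assoc] at ht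
  have hY : Y.Factors ((t ≫ biprod.fst) ≫ X.arrow) :=
    factors_left_of_factors_add _ _ (ht ▸ factors_zero) (factors_comp_arrow _)
  have hX : (t ≫ biprod.fst) ≫ X.arrow = 0 := by
    rw [← bot_factors_iff_zero, ← h, inf_factors]
    exact ⟨factors_comp_arrow _, hY⟩
  rw [hX, zero_add] at ht
  exact biprod.hom_ext _ _ (by simpa using zero_of_comp_mono _ hX)
    (by simpa using zero_of_comp_mono _ ht)

lemma epi_biprod_desc_arrow_of_sup_eq_top (h : X ⊔ Y = ⊤) :
    Epi (biprod.desc X.arrow Y.arrow) := by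
  refine Preadditive.epi_of_cancel_zero _ fun {R} φ hφ => ?_
  have hX : X ≤ kernelSubobject φ := le_kernelSubobject _ _ (by simpa using biprod.inl ≫= hφ)
  have hY : Y ≤ kernelSubobject φ := le_kernelSubobject _ _ (by simpa using biprod.inr ≫= hφ)
  have htop : (⊤ : Subobject A) ≤ kernelSubobject φ := h ▸ sup_le hX hY
  simpa using (kernelSubobject_factors_iff φ (𝟙 A)).1 (factors_of_le _ htop (top_factors _))

lemma isIso_biprod_desc_arrow_of_isCompl (h : IsCompl X Y) :
    IsIso (biprod.desc X.arrow Y.arrow) :=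
  have := mono_biprod_desc_arrow_of_inf_eq_bot h.inf_eq_bot
  have := epi_biprod_desc_arrow_of_sup_eq_top h.sup_eq_top
  isIso_of_mono_of_epi _

end Subobject

section Endomorphism

variable (g : A ⟶ A)

lemma kernelSubobject_inf_imageSubobject_eq_bot
    (h : kernelSubobject (g ≫ g) ≤ kernelSubobject g) :
    kernelSubobject g ⊓ imageSubobject g = ⊥ := by
  set S := kernelSubobject g ⊓ imageSubobject g
  have hS : S.arrow ≫ g = 0 := by
    rw [← Subobject.ofLE_arrow inf_le_left, Category.assoc, kernelSubobject_arrow_comp,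
      comp_zero]
  obtain ⟨T, π, _, c, hc⟩ := surjective_up_to_refinements_of_epi
    (factorThruImageSubobject g) (Subobject.ofLE _ _ inf_le_right : (S : C) ⟶ imageSubobject g)
  have hπ : π ≫ S.arrow = c ≫ g := by
    simpa using hc =≫ (imageSubobject g).arrow
  have hcg : c ≫ g = 0 := by
    refine (kernelSubobject_factors_iff g c).1 (Subobject.factors_of_le c h ?_)
    exact kernelSubobject_factors _ _
      (by rw [← Category.assoc, ← hπ, Category.assoc, hS, comp_zero])
  rw [← Subobject.mk_arrow S, Subobject.mk_eq_bot_iff_zero]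
  exact zero_of_epi_comp π (hπ.trans hcg)

lemma kernelSubobject_sup_imageSubobject_eq_top
    (h : imageSubobject g ≤ imageSubobject (g ≫ g)) :
    kernelSubobject g ⊔ imageSubobject g = ⊤ := by
  have : Epi (kernelSubobject g ⊔ imageSubobject g).arrow := by
    rw [epi_iff_surjective_up_to_refinements]
    intro T x
    obtain ⟨T', π, _, y, hy⟩ := surjective_up_to_refinements_of_epi
      (factorThruImageSubobject (g ≫ g)) (x ≫ factorThruImageSubobject g ≫ Subobject.ofLE _ _ h)
    have hπ : π ≫ x ≫ g = y ≫ g ≫ g := by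
      simpa using hy =≫ (imageSubobject (g ≫ g)).arrow
    have hK : (kernelSubobject g).Factors (π ≫ x - y ≫ g) :=
      kernelSubobject_factors _ _ (by simp [Preadditive.sub_comp, hπ])
    have hI : (imageSubobject g).Factors (y ≫ g) := imageSubobject_factors_comp_self g y
    have hsup := Subobject.factors_add _ _ (Subobject.sup_factors_of_factors_left hK)
      (Subobject.sup_factors_of_factors_right hI)
    rw [sub_add_cancel] at hsup
    exact ⟨T', π, inferInstance, _, (Subobject.factorThru_arrow _ _ hsup).symm⟩
  have := isIso_of_mono_of_epi (kernelSubobject g ⊔ imageSubobject g).arrow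
  exact Subobject.eq_top_of_isIso_arrow _

lemma isCompl_kernelSubobject_imageSubobject
    (hker : kernelSubobject (g ≫ g) ≤ kernelSubobject g)
    (him : imageSubobject g ≤ imageSubobject (g ≫ g)) :
    IsCompl (kernelSubobject g) (imageSubobject g) :=
  IsCompl.of_eq (kernelSubobject_inf_imageSubobject_eq_bot g hker)
    (kernelSubobject_sup_imageSubobject_eq_top g him)

end Endomorphism

section Powers

variable (f : End A)

lemma monotone_kernelSubobject_pow :
    Monotone fun n : ℕ => kernelSubobject ((f ^ n : End A) : A ⟶ A) :=
  monotone_nat_of_le_succ fun n => by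
    rw [pow_succ']
    exact kernelSubobject_comp_le _ _

lemma antitone_imageSubobject_pow :
    Antitone fun n : ℕ => imageSubobject ((f ^ n : End A) : A ⟶ A) :=
  antitone_nat_of_succ_le fun n => by
    rw [pow_succ]
    exact imageSubobject_comp_le _ _

end Powers

end CategoryTheory

/-- (Fitting Lemma) If `A` is an object of finite length in an abelian category
(i.e. both noetherian and artinian) and `f : A ⟶ A` is an endomorphism, then for all
sufficiently large `n` the subobjects `Ker fⁿ` and `Im fⁿ` are complements in the
subobject lattice of `A`, and the morphism `Ker fⁿ ⊞ Im fⁿ ⟶ A` induced by the two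
inclusions is an isomorphism, so `A ≅ Ker fⁿ ⊕ Im fⁿ`. -/
theorem fitting_lemma {𝒜 : Type*} [Category 𝒜] [Abelian 𝒜]
    (A : 𝒜) [IsNoetherianObject A] [IsArtinianObject A] (f : End A) :
    ∃ N : ℕ, ∀ n ≥ N,
      IsCompl (kernelSubobject ((f ^ n : End A) : A ⟶ A))
        (imageSubobject ((f ^ n : End A) : A ⟶ A)) ∧
      IsIso (biprod.desc (kernelSubobject ((f ^ n : End A) : A ⟶ A)).arrow
        (imageSubobject ((f ^ n : End A) : A ⟶ A)).arrow) := by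
  obtain ⟨N₁, hN₁⟩ := WellFoundedGT.monotone_chain_condition ⟨_, monotone_kernelSubobject_pow f⟩
  obtain ⟨N₂, hN₂⟩ := WellFoundedLT.antitone_chain_condition (antitone_imageSubobject_pow f)
  refine ⟨max N₁ N₂, fun n hn => ?_⟩
  have hsq : ((f ^ n : End A) : A ⟶ A) ≫ (f ^ n : End A) = (f ^ (n + n) : End A) :=
    (pow_add f n n).symm
  have hker : kernelSubobject ((f ^ (n + n) : End A) : A ⟶ A) =
      kernelSubobject (f ^ n : End A) :=
    (hN₁ (n + n) (by omega)).symm.trans (hN₁ n (by omega))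
  have him : imageSubobject ((f ^ (n + n) : End A) : A ⟶ A) = imageSubobject (f ^ n : End A) :=
    (hN₂ (n + n) (by omega)).symm.trans (hN₂ n (by omega))
  have hcompl := isCompl_kernelSubobject_imageSubobject _ (hsq ▸ hker.le) (hsq ▸ him.ge)
  exact ⟨hcompl, Subobject.isIso_biprod_desc_arrow_of_isCompl hcompl⟩
end

section
/- Let 𝒜 be an abelian category and G : 𝒜ᵒᵖ × 𝒜 ⥤ Ab an additive bifunctor with values in abelian groups such that for every object X of 𝒜, the map Hom(X,X) → Nat(G(X,-), G(X,-)) sending f to the natural transformation G(f,-) is surjective. Let A be a noetherian object of 𝒜 satisfying the descending chain condition on images of nested endomorphisms. If an additive functor F : 𝒜 ⥤ Ab is a direct summand (retract) of the functor G(A,-), then there exists a subobject B of A such that F is naturally isomorphic to G(B,-). -/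
/-!
Choose `f : A ⟶ A` with `G(f,-) = π ≫ ι`. As `A` is noetherian the kernels of the powers of `f`
stabilize, and since the image of `f^(n+1)` is the image of the restriction of `f` to the image
of `f^n`, the DCC stabilizes the images too. For `g = f^N` with `N` large, Fitting's argument
shows that `g` restricts to an automorphism of its image `B`: writing `g = q ≫ m` through `B`,
the map `m ≫ q` is invertible. Then `G(m,-) ≫ G(q,-) = G(g,-) = π ≫ ι` is idempotent while
`G(q,-) ≫ G(m,-)` is invertible, hence the identity, so `F` and `G(B,-)` are two splittings of
the same idempotent of `G(A,-)`.
-/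

open CategoryTheory CategoryTheory.Limits Opposite

universe w v u

/-- An object `A` of an abelian category satisfies the *descending chain condition on
images of nested endomorphisms* if every descending chain
`A = A₀ ⊇ A₁ ⊇ A₂ ⊇ …` of subobjects of `A`, in which each `Aᵢ₊₁` is the image of some
endomorphism of `Aᵢ`, stabilizes (as a chain of subobjects of `A`). -/
def DCCImagesOfNestedEndomorphisms {𝒜 : Type u} [Category.{v} 𝒜] [Abelian 𝒜] (A : 𝒜) : Prop :=
  ∀ c : ℕ → Subobject A, c 0 = ⊤ →
    (∀ i : ℕ, (c (i + 1) ≤ c i) ∧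
      ∃ g : ((c i : 𝒜) ⟶ (c i : 𝒜)),
        c (i + 1) = (Subobject.map (c i).arrow).obj (imageSubobject g)) →
    ∃ n : ℕ, ∀ m : ℕ, n ≤ m → c m = c n

namespace CategoryTheory

section Idempotents

variable {C : Type*} [Category C]

lemma comp_eq_id_of_isIso_of_idempotent {X Y : C} (p : X ⟶ Y) (s : Y ⟶ X)
    (hidem : (p ≫ s) ≫ (p ≫ s) = p ≫ s) [IsIso (s ≫ p)] : s ≫ p = 𝟙 Y := by
  rw [← cancel_epi (s ≫ p), ← cancel_epi (s ≫ p), Category.comp_id]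
  calc (s ≫ p) ≫ (s ≫ p) ≫ s ≫ p = s ≫ ((p ≫ s) ≫ (p ≫ s)) ≫ p := by
        simp only [Category.assoc]
    _ = (s ≫ p) ≫ s ≫ p := by rw [hidem]; simp only [Category.assoc]

namespace Retract

variable {X Y Z : C}

lemma r_comp_i_idempotent (h : Retract X Y) : (h.r ≫ h.i) ≫ (h.r ≫ h.i) = h.r ≫ h.i := by
  simp

def isoOfIdempotentEq (h₁ : Retract X Z) (h₂ : Retract Y Z) (h : h₁.r ≫ h₁.i = h₂.r ≫ h₂.i) :
    X ≅ Y where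
  hom := h₁.i ≫ h₂.r
  inv := h₂.i ≫ h₁.r
  hom_inv_id := by
    calc (h₁.i ≫ h₂.r) ≫ h₂.i ≫ h₁.r = h₁.i ≫ (h₂.r ≫ h₂.i) ≫ h₁.r := by
          simp only [Category.assoc]
      _ = 𝟙 X := by simp [← h]
  inv_hom_id := by
    calc (h₂.i ≫ h₁.r) ≫ h₁.i ≫ h₂.r = h₂.i ≫ (h₁.r ≫ h₁.i) ≫ h₂.r := by
          simp only [Category.assoc]
      _ = 𝟙 Y := by simp [h]

end Retract

lemma Functor.map_pow_succ_op_of_idempotent {D : Type*} [Category D] (H : Cᵒᵖ ⥤ D) {X : C}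
    (f : End X) (hf : H.map f.op ≫ H.map f.op = H.map f.op) (n : ℕ) :
    H.map (f ^ (n + 1)).op = H.map f.op := by
  induction n with
  | zero => rw [zero_add, pow_one]
  | succ n ih => rw [pow_succ' f (n + 1), End.mul_def, op_comp, H.map_comp, ih, hf]

end Idempotents

section Abelian

variable {𝒜 : Type*} [Category 𝒜] [Abelian 𝒜] {A : 𝒜}

lemma imageSubobject_epi_comp {W X Y : 𝒜} (e : W ⟶ X) [Epi e] (u : X ⟶ Y) :
    imageSubobject (e ≫ u) = imageSubobject u := by
  refine le_antisymm (imageSubobject_comp_le e u) ?_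
  have := strongEpi_of_epi e
  have sq : CommSq (factorThruImageSubobject (e ≫ u)) e (imageSubobject (e ≫ u)).arrow u :=
    ⟨by simp⟩
  exact imageSubobject_le u sq.lift sq.fac_right

lemma map_imageSubobject {X Y Z : 𝒜} (u : X ⟶ Y) (m : Y ⟶ Z) [Mono m] :
    (Subobject.map m).obj (imageSubobject u) = imageSubobject (u ≫ m) := by
  conv_rhs => rw [← imageSubobject_arrow_comp u, Category.assoc, imageSubobject_epi_comp,
    imageSubobject_mono]
  rw [← Subobject.map_mk, Subobject.mk_arrow]

lemma exists_imageSubobject_comp_eq_map {u f : A ⟶ A} (h : u ≫ f = f ≫ u) :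
    ∃ g : (imageSubobject u : 𝒜) ⟶ imageSubobject u,
      imageSubobject (u ≫ f) = (Subobject.map (imageSubobject u).arrow).obj (imageSubobject g) := by
  have sq : CommSq (f ≫ factorThruImageSubobject u) (factorThruImageSubobject u)
      (imageSubobject u).arrow ((imageSubobject u).arrow ≫ f) := ⟨by simp [h]⟩
  have := strongEpi_of_epi (factorThruImageSubobject u)
  -- `sq.lift` is the restriction of `f` to its invariant subobject `imageSubobject u`
  refine ⟨sq.lift, ?_⟩
  rw [map_imageSubobject, sq.fac_right, ← imageSubobject_epi_comp (factorThruImageSubobject u),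
    imageSubobject_arrow_comp_assoc]

lemma exists_comp_eq_of_imageSubobject_le {X Y Z : 𝒜} {u : X ⟶ Z} {v : Y ⟶ Z}
    (h : imageSubobject u ≤ imageSubobject v) {T : 𝒜} (a : T ⟶ X) :
    ∃ (T' : 𝒜) (e : T' ⟶ T) (_ : Epi e) (b : T' ⟶ Y), e ≫ a ≫ u = b ≫ v := by
  obtain ⟨T', e, he, b, hb⟩ := surjective_up_to_refinements_of_epi (factorThruImageSubobject v)
    (a ≫ factorThruImageSubobject u ≫ Subobject.ofLE _ _ h)
  refine ⟨T', e, he, b, ?_⟩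
  rw [← imageSubobject_arrow_comp u, ← imageSubobject_arrow_comp v, ← Subobject.ofLE_arrow h]
  simp only [← Category.assoc] at hb ⊢
  rw [hb]

lemma mono_arrow_comp_factorThruImageSubobject {g : A ⟶ A}
    (hker : kernelSubobject (g ≫ g) ≤ kernelSubobject g) :
    Mono ((imageSubobject g).arrow ≫ factorThruImageSubobject g) := by
  refine Preadditive.mono_of_cancel_zero _ fun {T} x hx ↦ ?_
  obtain ⟨T', e, _, y, hy⟩ := surjective_up_to_refinements_of_epi (factorThruImageSubobject g) x
  have hyg : y ≫ g = 0 := by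
    rw [← kernelSubobject_factors_iff]
    refine Subobject.factors_of_le _ hker ((kernelSubobject_factors_iff _ _).2 ?_)
    rw [← imageSubobject_arrow_comp g]
    simp only [← Category.assoc]
    simp [← hy, hx]
  have hex : e ≫ x = 0 := by
    rw [← cancel_mono (imageSubobject g).arrow, hy, Category.assoc, imageSubobject_arrow_comp,
      hyg, zero_comp]
  exact zero_of_epi_comp e hex

lemma epi_arrow_comp_factorThruImageSubobject {g : A ⟶ A}
    (him : imageSubobject g ≤ imageSubobject (g ≫ g)) :
    Epi ((imageSubobject g).arrow ≫ factorThruImageSubobject g) := by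
  rw [epi_iff_surjective_up_to_refinements]
  intro T b
  obtain ⟨T₁, e₁, _, a, ha⟩ := surjective_up_to_refinements_of_epi (factorThruImageSubobject g) b
  obtain ⟨T₂, e₂, _, a', ha'⟩ := exists_comp_eq_of_imageSubobject_le him a
  refine ⟨T₂, e₂ ≫ e₁, inferInstance, a' ≫ factorThruImageSubobject g, ?_⟩
  rw [← cancel_mono (imageSubobject g).arrow]
  simp only [Category.assoc, imageSubobject_arrow_comp, imageSubobject_arrow_comp_assoc]
  rw [reassoc_of% ha, imageSubobject_arrow_comp, ha']

lemma isIso_arrow_comp_factorThruImageSubobject {g : A ⟶ A}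
    (hker : kernelSubobject (g ≫ g) ≤ kernelSubobject g)
    (him : imageSubobject g ≤ imageSubobject (g ≫ g)) :
    IsIso ((imageSubobject g).arrow ≫ factorThruImageSubobject g) :=
  have := mono_arrow_comp_factorThruImageSubobject hker
  have := epi_arrow_comp_factorThruImageSubobject him
  isIso_of_mono_of_epi _

lemma exists_kernelSubobject_pow_eq [IsNoetherianObject A] (f : End A) :
    ∃ N, ∀ m, N ≤ m → kernelSubobject (f ^ m) = kernelSubobject (f ^ N) := by
  obtain ⟨N, hN⟩ := monotone_chain_condition_of_isNoetherianObject
    ⟨fun n ↦ kernelSubobject (f ^ n), monotone_nat_of_le_succ fun n ↦ by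
      rw [pow_succ']; exact kernelSubobject_comp_le _ _⟩
  exact ⟨N, fun m hm ↦ (hN m hm).symm⟩

lemma exists_imageSubobject_pow_eq (hA : DCCImagesOfNestedEndomorphisms A) (f : End A) :
    ∃ N, ∀ m, N ≤ m → imageSubobject (f ^ m) = imageSubobject (f ^ N) := by
  refine hA (fun n ↦ imageSubobject (f ^ n)) ?_ fun n ↦ ⟨?_, ?_⟩
  · rw [pow_zero, End.one_def, imageSubobject_mono, ← Subobject.top_eq_id]
  · rw [pow_succ]; exact imageSubobject_comp_le _ _
  · rw [pow_succ']; exact exists_imageSubobject_comp_eq_map (Commute.self_pow f n).eq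

lemma exists_isIso_arrow_comp_factorThruImageSubobject_pow [IsNoetherianObject A]
    (hA : DCCImagesOfNestedEndomorphisms A) (f : End A) :
    ∃ n, IsIso ((imageSubobject (f ^ (n + 1))).arrow ≫
      factorThruImageSubobject (f ^ (n + 1))) := by
  obtain ⟨N₁, hker⟩ := exists_kernelSubobject_pow_eq f
  obtain ⟨N₂, him⟩ := exists_imageSubobject_pow_eq hA f
  refine ⟨N₁ + N₂, isIso_arrow_comp_factorThruImageSubobject ?_ ?_⟩
  all_goals rw [← End.mul_def, ← pow_add]
  · exact ((hker _ (by omega)).trans (hker _ (by omega)).symm).le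
  · exact ((him _ (by omega)).trans (him _ (by omega)).symm).le

end Abelian

end CategoryTheory

/-- Let `G : 𝒜ᵒᵖ × 𝒜 ⥤ Ab` be an additive bifunctor (given here in curried form,
additive in each variable) such that for every object `X` every natural endomorphism of
`G(X,-)` is induced by an endomorphism of `X`.  If `A` is a noetherian object satisfying
the DCC on images of nested endomorphisms and the additive functor `F` is a direct summand
(retract) of `G(A,-)`, then `F ≅ G(B,-)` for some subobject `B` of `A`. -/
theorem direct_summand_of_bifunctor_fixed_argument {𝒜 : Type u} [Category.{v} 𝒜] [Abelian 𝒜]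
    (G : 𝒜ᵒᵖ ⥤ 𝒜 ⥤ AddCommGrpCat.{w}) [G.Additive] [∀ X : 𝒜ᵒᵖ, (G.obj X).Additive]
    (hsurj : ∀ (X : 𝒜) (η : G.obj (op X) ⟶ G.obj (op X)), ∃ f : X ⟶ X, G.map f.op = η)
    (A : 𝒜) [IsNoetherianObject A] (hdcc : DCCImagesOfNestedEndomorphisms A)
    (F : 𝒜 ⥤ AddCommGrpCat.{w}) [F.Additive]
    (ι : F ⟶ G.obj (op A)) (π : G.obj (op A) ⟶ F) (hπι : ι ≫ π = 𝟙 F) :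
    ∃ B : Subobject A, Nonempty (F ≅ G.obj (op (B : 𝒜))) := by
  let R : Retract F (G.obj (op A)) := ⟨ι, π, hπι⟩
  obtain ⟨f, hf⟩ : ∃ f : End A, G.map f.op = π ≫ ι := hsurj A (π ≫ ι)
  obtain ⟨n, _⟩ := exists_isIso_arrow_comp_factorThruImageSubobject_pow hdcc f
  set g : A ⟶ A := f ^ (n + 1)
  set m := (imageSubobject g).arrow
  set q := factorThruImageSubobject g
  have hg : G.map g.op = π ≫ ι :=
    (G.map_pow_succ_op_of_idempotent f (hf ▸ R.r_comp_i_idempotent) n).trans hf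
  have hsplit : G.map m.op ≫ G.map q.op = π ≫ ι := by
    rw [← G.map_comp, ← op_comp, imageSubobject_arrow_comp, hg]
  have : IsIso (G.map q.op ≫ G.map m.op) := by rw [← G.map_comp, ← op_comp]; infer_instance
  have hsec := comp_eq_id_of_isIso_of_idempotent _ _ (hsplit ▸ R.r_comp_i_idempotent)
  exact ⟨imageSubobject g, ⟨R.isoOfIdempotentEq ⟨G.map q.op, G.map m.op, hsec⟩ hsplit.symm⟩⟩
end
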